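/- For any R-module M, the additivization Add_R(R[M~]) of the composition of M~ with the free R-module functor is naturally isomorphic to M, where Add_R is left adjoint to the embedding M ↦ M~ of R-modules into all functors from M(R) to R-modules. -/

import Mathlib

/-!
Composing the adjunctions `free ⊣ forget` and `Add_R ⊣ (·)~` shows that `F ↦ Add_R (R[F])` is
left adjoint to the functor sending `M` to the underlying set-valued functor of `M~`, so the
counit `Add_R (R[M~]) → M` is an isomorphism once this right adjoint is fully faithful. A natural transformation `η` between such
set-valued functors is recovered from `φ m := η_R (u ↦ u 1 • m) (id)`: naturality along a
functional `f : M₁ → R` gives `η_{M₁} ξ f = φ (ξ f)`, and since `η_{M₁} ξ` is linear, taking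
`M₁ = R²` and `ξ u = u (1, 0) • m₁ + u (0, 1) • m₂` shows that `φ` is additive.
-/

open CategoryTheory

/-- The category `M(R)` of finitely generated free `R`-modules. -/
abbrev FFMod (R : Type) [CommRing R] :=
  ObjectProperty.FullSubcategory (fun M : ModuleCat.{0} R => Module.Finite R M ∧ Module.Free R M)

/-- The duality functor `M₁ ↦ M₁* = Hom_R(M₁, R)` on `M(R)`, with values in
`(ModuleCat R)ᵒᵖ`. -/
@[simps] def dualFF (R : Type) [CommRing R] : FFMod R ⥤ (ModuleCat R)ᵒᵖ where
  obj M := Opposite.op (ModuleCat.of R (M.obj →ₗ[R] R))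
  map {M N} f := (ModuleCat.ofHom (LinearMap.dualMap (f.hom.hom : M.obj →ₗ[R] N.obj))).op
  map_id := by intro M; rfl
  map_comp := by intro M N P f g; rfl

/-- The functor sending an `R`-module `M` to the functor
`M~ : M(R) ⥤ R-mod`, `M~(M₁) = Hom_R(M₁*, M)`. -/
noncomputable def tildeFun (R : Type) [CommRing R] :
    ModuleCat R ⥤ FFMod R ⥤ ModuleCat R :=
  linearYoneda R (ModuleCat R) ⋙
    (Functor.whiskeringLeft (FFMod R) (ModuleCat R)ᵒᵖ (ModuleCat R)).obj (dualFF R)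

abbrev FFMod.of (R : Type) [CommRing R] (X : Type) [AddCommGroup X] [Module R X]
    [Module.Finite R X] [Module.Free R X] : FFMod R :=
  ⟨ModuleCat.of R X, ⟨‹_›, ‹_›⟩⟩

noncomputable abbrev tildeSet (R : Type) [CommRing R] : ModuleCat R ⥤ FFMod R ⥤ Type :=
  tildeFun R ⋙ (Functor.whiskeringRight (FFMod R) (ModuleCat R) Type).obj (forget (ModuleCat R))

namespace tildeSet

variable {R : Type} [CommRing R] {M N : ModuleCat R}

noncomputable abbrev single (m : M) : ModuleCat.of R ((FFMod.of R R).obj →ₗ[R] R) ⟶ M :=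
  ModuleCat.ofHom ((LinearMap.applyₗ (1 : R)).smulRight m)

noncomputable def coeff (η : (tildeSet R).obj M ⟶ (tildeSet R).obj N) (m : M) : N :=
  (η.app (FFMod.of R R) (single m)).hom LinearMap.id

lemma app_apply (η : (tildeSet R).obj M ⟶ (tildeSet R).obj N) {M₁ : FFMod R}
    (ξ : ModuleCat.of R (M₁.obj →ₗ[R] R) ⟶ M) (f : M₁.obj →ₗ[R] R) :
    (η.app M₁ ξ).hom f = coeff η (ξ.hom f) := by
  let pf : M₁ ⟶ FFMod.of R R := ObjectProperty.homMk (ModuleCat.ofHom f)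
  have pullback_ξ : ((tildeSet R).obj M).map pf ξ = single (ξ.hom f) :=
    ModuleCat.hom_ext <| LinearMap.ext fun (u : R →ₗ[R] R) => by
      change ξ.hom (u ∘ₗ f) = u 1 • ξ.hom f
      rw [show u ∘ₗ f = u 1 • f by ext x; simp, map_smul]
  have h : η.app _ (((tildeSet R).obj M).map pf ξ) = ((tildeSet R).obj N).map pf (η.app M₁ ξ) :=
    types_congr_hom (η.naturality pf) ξ
  rw [pullback_ξ] at h
  exact (congrArg (fun x : ModuleCat.of R (R →ₗ[R] R) ⟶ N => x.hom LinearMap.id) h).symm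

lemma coeff_add (η : (tildeSet R).obj M ⟶ (tildeSet R).obj N) (m₁ m₂ : M) :
    coeff η (m₁ + m₂) = coeff η m₁ + coeff η m₂ := by
  let ξ : ModuleCat.of R ((FFMod.of R (R × R)).obj →ₗ[R] R) ⟶ M := ModuleCat.ofHom
    ((LinearMap.applyₗ ((1, 0) : R × R)).smulRight m₁
      + (LinearMap.applyₗ ((0, 1) : R × R)).smulRight m₂)
  have h := app_apply η ξ
  calc coeff η (m₁ + m₂) = coeff η (ξ.hom (LinearMap.fst R R R + LinearMap.snd R R R)) := by
        simp [ξ]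
    _ = (η.app _ ξ).hom (LinearMap.fst R R R) + (η.app _ ξ).hom (LinearMap.snd R R R) := by
        rw [← h]
        exact map_add (η.app _ ξ).hom _ _
    _ = coeff η m₁ + coeff η m₂ := by rw [h, h]; simp [ξ]

lemma coeff_smul (η : (tildeSet R).obj M ⟶ (tildeSet R).obj N) (r : R) (m : M) :
    coeff η (r • m) = r • coeff η m := by
  calc coeff η (r • m) = coeff η ((single m).hom (r • LinearMap.id)) := by simp
    _ = r • coeff η m := by
        rw [← app_apply]
        exact map_smul (η.app (FFMod.of R R) (single m)).hom r LinearMap.id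

noncomputable def coeffLinearMap (η : (tildeSet R).obj M ⟶ (tildeSet R).obj N) : M →ₗ[R] N where
  toFun := coeff η
  map_add' := coeff_add η
  map_smul' := coeff_smul η

lemma coeff_map (f : M ⟶ N) (m : M) : coeff ((tildeSet R).map f) m = f m := by
  change f.hom ((LinearMap.id : R →ₗ[R] R) 1 • m) = f.hom m
  simp

variable (R) in
noncomputable def fullyFaithful : (tildeSet R).FullyFaithful where
  preimage η := ModuleCat.ofHom (coeffLinearMap η)
  map_preimage η := by
    refine NatTrans.ext <| funext fun M₁ => ConcreteCategory.hom_ext _ _ fun ξ => ?_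
    exact ModuleCat.hom_ext <| LinearMap.ext fun f => (app_apply η ξ f).symm
  preimage_map f := ModuleCat.hom_ext <| LinearMap.ext (coeff_map f)

end tildeSet

/-- for any left adjoint `Add_R` of the embedding `M ↦ M~` of `R`-modules
into all functors from `M(R)` to `R`-modules, and any `R`-module `M`, one has
`Add_R (R[M~]) ≅ M`, where `R[M~]` is the pointwise free `R`-module functor on `M~`. -/
theorem additivization_of_free_of_tilde (R : Type) [CommRing R]
    (AddR : (FFMod R ⥤ ModuleCat R) ⥤ ModuleCat R) (adj : AddR ⊣ tildeFun R)
    (M : ModuleCat R) :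
    Nonempty (AddR.obj ((tildeFun R).obj M ⋙ forget (ModuleCat R) ⋙ ModuleCat.free R)
      ≅ M) := by
  let adjFree := (Adjunction.whiskerRight (FFMod R) (ModuleCat.adj R)).comp adj
  have := (tildeSet.fullyFaithful R).full
  have := (tildeSet.fullyFaithful R).faithful
  exact ⟨asIso (adjFree.counit.app M)⟩
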